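/- (Discrete energy conservation of Splitting method I.) Let I, J, K ≥ 3 be odd integers, ε, μ, τ, h_x, h_y, h_z > 0 and λ ∈ ℝ. Let E_m⁰, H_m⁰, E_m^{[1]}, H_m^{[1]}, E_m^{[2]}, H_m^{[2]}, E_m¹, H_m¹ : Fin I × Fin J × Fin K → ℝ (m = 1,2,3) be grid fields and θ : Fin I × Fin J × Fin K → ℝ. Assume: (Stage 1) for every (j,k), the stacked x-slice vector (ε(E₃^{[1]} − E₃⁰)_{·,j,k}, μ(H₂^{[1]} − H₂⁰)_{·,j,k}) ∈ ℝ^{2I} equals (τ/h_x)·𝒜_I⁻¹ℬ_I applied to ((E₃^{[1]} + E₃⁰)/2, (H₂^{[1]} + H₂⁰)/2)_{·,j,k}; for every (i,k), the stacked y-slice vector for the pair (E₁, H₃) satisfies the same relation with factor τ/h_y and matrices 𝒜_J⁻¹ℬ_J; and for every (i,j), the stacked z-slice vector for the pair (E₂, H₁) satisfies the same relation with factor τ/h_z and matrices 𝒜_K⁻¹ℬ_K. (Stage 2) the analogous relations hold from (E^{[1]},H^{[1]}) to (E^{[2]},H^{[2]}) for the pair (E₂,H₃) in the x-direction with factor −τ/h_x,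 for (E₃,H₁) in the y-direction with factor −τ/h_y, and for (E₁,H₂) in the z-direction with factor −τ/h_z. (Stage 3) at every grid point (i,j,k), with c = cos(λθ(i,j,k)/√(εμ)) and s = sin(λθ(i,j,k)/√(εμ)), one has E_m¹ = c E_m^{[2]} − √(μ/ε) s H_m^{[2]} and H_m¹ = √(ε/μ) s E_m^{[2]} + c H_m^{[2]} for m = 1,2,3. Then the discrete energy is conserved: ℰ(E¹,H¹) = ℰ(E⁰,H⁰). -/

import Mathlib

/-!
Every substep conserves the energy on its own. In a midpoint stage, 𝒜ₙ is symmetric and ℬₙ is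
skew-symmetric, and both are circulant, hence commute; so 𝒜ₙ⁻¹ℬₙ is skew-symmetric and the pairing
of the stage relation with the midpoint vector, which is half the change of ε|u|² + μ|v|², vanishes.
Summing over all slices of the grid conserves the energy of the pair of fields the stage updates.
The noise stage is, at every grid point, a rotation of the vector (√ε E, √μ H).
-/

open Matrix

/-- The n×n circulant matrix with 1 on the diagonal and 1/2 on the (mod n)
super- and sub-diagonals. -/
noncomputable def matA (n : ℕ) [NeZero n] : Matrix (Fin n) (Fin n) ℝ :=
  fun i j => if j = i then 1 else if j = i + 1 ∨ j = i - 1 then (1 : ℝ)/2 else 0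

/-- The n×n circulant central-difference matrix with 1 on the (mod n)
super-diagonal and -1 on the (mod n) sub-diagonal. -/
def matB (n : ℕ) [NeZero n] : Matrix (Fin n) (Fin n) ℝ :=
  fun i j => if j = i + 1 then 1 else if j = i - 1 then -1 else 0

/-- The 2n×2n block-diagonal matrix diag(A, A). -/
noncomputable def calA (n : ℕ) [NeZero n] : Matrix (Fin n ⊕ Fin n) (Fin n ⊕ Fin n) ℝ :=
  Matrix.fromBlocks (matA n) 0 0 (matA n)

/-- The 2n×2n block matrix [[0, B],[B, 0]]. -/
def calB (n : ℕ) [NeZero n] : Matrix (Fin n ⊕ Fin n) (Fin n ⊕ Fin n) ℝ :=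
  Matrix.fromBlocks 0 (matB n) (matB n) 0

/-- One implicit-midpoint stage relation along a one-dimensional slice:
the stacked vector (ε(u'−u), μ(v'−v)) equals c · 𝒜⁻¹ℬ applied to the
stacked midpoint vector ((u'+u)/2, (v'+v)/2). -/
noncomputable def stageRel (n : ℕ) [NeZero n] (ε μ c : ℝ)
    (u u' v v' : Fin n → ℝ) : Prop :=
  Sum.elim (fun i => ε * (u' i - u i)) (fun i => μ * (v' i - v i)) =
    c • (((calA n)⁻¹ * calB n) *ᵥ
      Sum.elim (fun i => (u' i + u i) / 2) (fun i => (v' i + v i) / 2))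

/-- The discrete electromagnetic energy of grid fields (E₁,E₂,E₃), (H₁,H₂,H₃). -/
noncomputable def discreteEnergy {I J K : ℕ} (ε μ : ℝ)
    (E1 E2 E3 H1 H2 H3 : Fin I × Fin J × Fin K → ℝ) : ℝ :=
  ε * (∑ p, E1 p ^ 2 + ∑ p, E2 p ^ 2 + ∑ p, E3 p ^ 2) +
    μ * (∑ p, H1 p ^ 2 + ∑ p, H2 p ^ 2 + ∑ p, H3 p ^ 2)


open Finset

section

variable {n : ℕ} [NeZero n]

theorem matA_eq_circulant :
    matA n = circulant fun k => if k = 0 then 1 else if k = -1 ∨ k = 1 then 1 / 2 else 0 := by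
  ext i j
  obtain ⟨k, rfl⟩ : ∃ k, j = i - k := ⟨i - j, (sub_sub_cancel i j).symm⟩
  rw [circulant_apply, sub_sub_cancel]
  simp only [matA, sub_eq_add_neg, add_eq_left, add_right_inj, neg_eq_iff_eq_neg, neg_zero,
    neg_neg]

theorem matB_eq_circulant :
    matB n = circulant fun k => if k = -1 then 1 else if k = 1 then -1 else 0 := by
  ext i j
  obtain ⟨k, rfl⟩ : ∃ k, j = i - k := ⟨i - j, (sub_sub_cancel i j).symm⟩
  rw [circulant_apply, sub_sub_cancel]
  simp only [matB, sub_eq_add_neg, add_right_inj, neg_eq_iff_eq_neg, neg_neg]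

theorem matA_transpose : (matA n)ᵀ = matA n := by
  rw [matA_eq_circulant, transpose_circulant]
  congr 1
  funext k
  simp only [neg_eq_iff_eq_neg, neg_zero, neg_neg, or_comm]

theorem Fin.one_ne_neg_one (hn : 3 ≤ n) : (1 : Fin n) ≠ -1 := by
  rw [Ne, Fin.ext_iff, Fin.val_neg', Fin.val_one', Nat.mod_eq_of_lt (by omega : 1 < n),
    Nat.mod_eq_of_lt (by omega : n - 1 < n)]
  omega

theorem matB_transpose (hn : 3 ≤ n) : (matB n)ᵀ = -matB n := by
  rw [matB_eq_circulant, transpose_circulant, ← circulant_neg]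
  have := Fin.one_ne_neg_one hn
  congr 1
  funext k
  simp only [neg_eq_iff_eq_neg, Pi.neg_apply]
  grind

theorem commute_matA_matB : Commute (matA n) (matB n) := by
  rw [matA_eq_circulant, matB_eq_circulant]
  exact circulant_mul_comm _ _

theorem calA_transpose : (calA n)ᵀ = calA n := by
  rw [calA, fromBlocks_transpose, matA_transpose, transpose_zero]

theorem calB_transpose (hn : 3 ≤ n) : (calB n)ᵀ = -calB n := by
  rw [calB, fromBlocks_transpose, matB_transpose hn, transpose_zero, fromBlocks_neg, neg_zero]

theorem commute_calA_calB : Commute (calA n) (calB n) := by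
  simp only [Commute, SemiconjBy, calA, calB, fromBlocks_multiply, commute_matA_matB.eq,
    Matrix.mul_zero, Matrix.zero_mul, add_zero, zero_add]

end

section

variable {m R : Type*} [Fintype m] [CommRing R]

theorem Matrix.transpose_inv_mul_eq_neg [DecidableEq m] {A B : Matrix m m R} (hA : Aᵀ = A)
    (hB : Bᵀ = -B) (hAB : Commute A B) : (A⁻¹ * B)ᵀ = -(A⁻¹ * B) := by
  have hinv : Commute A⁻¹ B := by
    simpa only [zpow_neg_one] using Matrix.Commute.zpow_left hAB (-1)
  rw [transpose_mul, transpose_nonsing_inv, hA, hB, Matrix.neg_mul, hinv.eq]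

theorem Matrix.dotProduct_mulVec_self_eq_zero [IsAddTorsionFree R] {N : Matrix m m R}
    (hN : Nᵀ = -N) (x : m → R) : x ⬝ᵥ N *ᵥ x = 0 := by
  refine self_eq_neg.mp ?_
  conv_lhs => rw [dotProduct_mulVec, ← mulVec_transpose, hN, neg_mulVec, neg_dotProduct,
    dotProduct_comm]

end

def pairEnergy {P : Type*} [Fintype P] (ε μ : ℝ) (E H : P → ℝ) : ℝ :=
  ε * ∑ p, E p ^ 2 + μ * ∑ p, H p ^ 2

theorem pairEnergy_eq_of_stageRel {n : ℕ} [NeZero n] (hn : 3 ≤ n) {ε μ c : ℝ}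
    {u u' v v' : Fin n → ℝ} (h : stageRel n ε μ c u u' v v') :
    pairEnergy ε μ u' v' = pairEnergy ε μ u v := by
  set mid := Sum.elim (fun i => (u' i + u i) / 2) (fun i => (v' i + v i) / 2)
  have hskew : ((calA n)⁻¹ * calB n)ᵀ = -((calA n)⁻¹ * calB n) :=
    transpose_inv_mul_eq_neg calA_transpose (calB_transpose hn) commute_calA_calB
  have hpairing : Sum.elim (fun i => ε * (u' i - u i)) (fun i => μ * (v' i - v i)) ⬝ᵥ mid = 0 := by
    rw [h, smul_dotProduct, dotProduct_comm, dotProduct_mulVec_self_eq_zero hskew, smul_zero]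
  have hdiff : pairEnergy ε μ u' v' - pairEnergy ε μ u v =
      2 * (Sum.elim (fun i => ε * (u' i - u i)) (fun i => μ * (v' i - v i)) ⬝ᵥ mid) := by
    rw [sumElim_dotProduct_sumElim]
    simp only [pairEnergy, dotProduct, mul_sum, ← sum_add_distrib, ← sum_sub_distrib]
    exact sum_congr rfl fun i _ => by ring
  linarith

theorem pairEnergy_eq_sum_fibers {ι κ P : Type*} [Fintype ι] [Fintype κ] [Fintype P]
    (e : ι × κ ≃ P) (ε μ : ℝ) (E H : P → ℝ) :
    pairEnergy ε μ E H =
      ∑ k, pairEnergy ε μ (fun i => E (e (i, k))) (fun i => H (e (i, k))) := by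
  have hsum (f : P → ℝ) : ∑ p, f p = ∑ k, ∑ i, f (e (i, k)) :=
    (Fintype.sum_equiv e _ f fun _ => rfl).symm.trans (Fintype.sum_prod_type_right _)
  rw [pairEnergy, hsum (E · ^ 2), hsum (H · ^ 2)]
  simp only [pairEnergy, mul_sum, sum_add_distrib]

theorem pairEnergy_eq_of_fibers {ι κ P : Type*} [Fintype ι] [Fintype κ] [Fintype P]
    (e : ι × κ ≃ P) {ε μ : ℝ} {E H E' H' : P → ℝ}
    (h : ∀ k, pairEnergy ε μ (fun i => E' (e (i, k))) (fun i => H' (e (i, k))) =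
      pairEnergy ε μ (fun i => E (e (i, k))) (fun i => H (e (i, k)))) :
    pairEnergy ε μ E' H' = pairEnergy ε μ E H := by
  simp only [pairEnergy_eq_sum_fibers e, h]

theorem rotation_energy {ε μ : ℝ} (hε : 0 < ε) (hμ : 0 < μ) (t E H : ℝ) :
    ε * (Real.cos t * E - √(μ / ε) * Real.sin t * H) ^ 2 +
      μ * (√(ε / μ) * Real.sin t * E + Real.cos t * H) ^ 2 = ε * E ^ 2 + μ * H ^ 2 := by
  have ha : ε * √(μ / ε) ^ 2 = μ := by rw [Real.sq_sqrt (by positivity)]; field_simp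
  have hb : μ * √(ε / μ) ^ 2 = ε := by rw [Real.sq_sqrt (by positivity)]; field_simp
  have hab : ε * √(μ / ε) = μ * √(ε / μ) := by
    refine (sq_eq_sq₀ (by positivity) (by positivity)).mp ?_
    linear_combination ε * ha - μ * hb
  linear_combination (Real.sin t * H) ^ 2 * ha + (Real.sin t * E) ^ 2 * hb -
    2 * Real.cos t * Real.sin t * E * H * hab + (ε * E ^ 2 + μ * H ^ 2) * Real.cos_sq_add_sin_sq t

theorem pairEnergy_rotation {P : Type*} [Fintype P] {ε μ : ℝ} (hε : 0 < ε) (hμ : 0 < μ)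
    (φ : P → ℝ) {E H E' H' : P → ℝ}
    (hE : ∀ p, E' p = Real.cos (φ p) * E p - √(μ / ε) * Real.sin (φ p) * H p)
    (hH : ∀ p, H' p = √(ε / μ) * Real.sin (φ p) * E p + Real.cos (φ p) * H p) :
    pairEnergy ε μ E' H' = pairEnergy ε μ E H := by
  simp only [pairEnergy, mul_sum, ← sum_add_distrib, hE, hH, rotation_energy hε hμ]

def Equiv.prodLeftComm (α β γ : Type*) : α × β × γ ≃ β × α × γ where
  toFun x := (x.2.1, x.1, x.2.2)
  invFun x := (x.2.1, x.1, x.2.2)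
  left_inv _ := rfl
  right_inv _ := rfl

theorem splittingI_energy_conservation_general
    (I J K : ℕ) [NeZero I] [NeZero J] [NeZero K]
    (hI : 3 ≤ I) (hJ : 3 ≤ J) (hK : 3 ≤ K)
    (ε μ τ hx hy hz : ℝ) (hε : 0 < ε) (hμ : 0 < μ) (lam : ℝ)
    (E1n E2n E3n H1n H2n H3n E1a E2a E3a H1a H2a H3a
      E1b E2b E3b H1b H2b H3b E1f E2f E3f H1f H2f H3f :
        Fin I × Fin J × Fin K → ℝ)
    (θ : Fin I × Fin J × Fin K → ℝ)
    -- Stage 1: from (Eⁿ, Hⁿ) to (E^{[1]}, H^{[1]})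
    (hs1x : ∀ (j : Fin J) (k : Fin K), stageRel I ε μ (τ / hx)
      (fun i => E3n (i, j, k)) (fun i => E3a (i, j, k))
      (fun i => H2n (i, j, k)) (fun i => H2a (i, j, k)))
    (hs1y : ∀ (i : Fin I) (k : Fin K), stageRel J ε μ (τ / hy)
      (fun j => E1n (i, j, k)) (fun j => E1a (i, j, k))
      (fun j => H3n (i, j, k)) (fun j => H3a (i, j, k)))
    (hs1z : ∀ (i : Fin I) (j : Fin J), stageRel K ε μ (τ / hz)
      (fun k => E2n (i, j, k)) (fun k => E2a (i, j, k))
      (fun k => H1n (i, j, k)) (fun k => H1a (i, j, k)))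
    -- Stage 2: from (E^{[1]}, H^{[1]}) to (E^{[2]}, H^{[2]})
    (hs2x : ∀ (j : Fin J) (k : Fin K), stageRel I ε μ (-(τ / hx))
      (fun i => E2a (i, j, k)) (fun i => E2b (i, j, k))
      (fun i => H3a (i, j, k)) (fun i => H3b (i, j, k)))
    (hs2y : ∀ (i : Fin I) (k : Fin K), stageRel J ε μ (-(τ / hy))
      (fun j => E3a (i, j, k)) (fun j => E3b (i, j, k))
      (fun j => H1a (i, j, k)) (fun j => H1b (i, j, k)))
    (hs2z : ∀ (i : Fin I) (j : Fin J), stageRel K ε μ (-(τ / hz))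
      (fun k => E1a (i, j, k)) (fun k => E1b (i, j, k))
      (fun k => H2a (i, j, k)) (fun k => H2b (i, j, k)))
    -- Stage 3: pointwise rotation by the noise increment
    (hs3E1 : ∀ p, E1f p = Real.cos (lam * θ p / Real.sqrt (ε * μ)) * E1b p -
      Real.sqrt (μ / ε) * Real.sin (lam * θ p / Real.sqrt (ε * μ)) * H1b p)
    (hs3E2 : ∀ p, E2f p = Real.cos (lam * θ p / Real.sqrt (ε * μ)) * E2b p -
      Real.sqrt (μ / ε) * Real.sin (lam * θ p / Real.sqrt (ε * μ)) * H2b p)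
    (hs3E3 : ∀ p, E3f p = Real.cos (lam * θ p / Real.sqrt (ε * μ)) * E3b p -
      Real.sqrt (μ / ε) * Real.sin (lam * θ p / Real.sqrt (ε * μ)) * H3b p)
    (hs3H1 : ∀ p, H1f p = Real.sqrt (ε / μ) *
      Real.sin (lam * θ p / Real.sqrt (ε * μ)) * E1b p +
      Real.cos (lam * θ p / Real.sqrt (ε * μ)) * H1b p)
    (hs3H2 : ∀ p, H2f p = Real.sqrt (ε / μ) *
      Real.sin (lam * θ p / Real.sqrt (ε * μ)) * E2b p +
      Real.cos (lam * θ p / Real.sqrt (ε * μ)) * H2b p)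
    (hs3H3 : ∀ p, H3f p = Real.sqrt (ε / μ) *
      Real.sin (lam * θ p / Real.sqrt (ε * μ)) * E3b p +
      Real.cos (lam * θ p / Real.sqrt (ε * μ)) * H3b p) :
    discreteEnergy ε μ E1f E2f E3f H1f H2f H3f =
      discreteEnergy ε μ E1n E2n E3n H1n H2n H3n := by
  have h1x : pairEnergy ε μ E3a H2a = pairEnergy ε μ E3n H2n :=
    pairEnergy_eq_of_fibers (.refl _) fun jk => pairEnergy_eq_of_stageRel hI (hs1x jk.1 jk.2)
  have h1y : pairEnergy ε μ E1a H3a = pairEnergy ε μ E1n H3n :=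
    pairEnergy_eq_of_fibers (.prodLeftComm _ _ _) fun ik =>
      pairEnergy_eq_of_stageRel hJ (hs1y ik.1 ik.2)
  have h1z : pairEnergy ε μ E2a H1a = pairEnergy ε μ E2n H1n :=
    pairEnergy_eq_of_fibers ((Equiv.prodComm _ _).trans (.prodAssoc _ _ _)) fun ij =>
      pairEnergy_eq_of_stageRel hK (hs1z ij.1 ij.2)
  have h2x : pairEnergy ε μ E2b H3b = pairEnergy ε μ E2a H3a :=
    pairEnergy_eq_of_fibers (.refl _) fun jk => pairEnergy_eq_of_stageRel hI (hs2x jk.1 jk.2)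
  have h2y : pairEnergy ε μ E3b H1b = pairEnergy ε μ E3a H1a :=
    pairEnergy_eq_of_fibers (.prodLeftComm _ _ _) fun ik =>
      pairEnergy_eq_of_stageRel hJ (hs2y ik.1 ik.2)
  have h2z : pairEnergy ε μ E1b H2b = pairEnergy ε μ E1a H2a :=
    pairEnergy_eq_of_fibers ((Equiv.prodComm _ _).trans (.prodAssoc _ _ _)) fun ij =>
      pairEnergy_eq_of_stageRel hK (hs2z ij.1 ij.2)
  have h31 := pairEnergy_rotation hε hμ _ hs3E1 hs3H1
  have h32 := pairEnergy_rotation hε hμ _ hs3E2 hs3H2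
  have h33 := pairEnergy_rotation hε hμ _ hs3E3 hs3H3
  simp only [pairEnergy] at h1x h1y h1z h2x h2y h2z h31 h32 h33
  simp only [discreteEnergy]
  linarith

/-- Discrete energy conservation of Splitting method I. -/
theorem splittingI_energy_conservation
    (I J K : ℕ) [NeZero I] [NeZero J] [NeZero K]
    (hI : 3 ≤ I) (hJ : 3 ≤ J) (hK : 3 ≤ K)
    (hIo : Odd I) (hJo : Odd J) (hKo : Odd K)
    (ε μ τ hx hy hz : ℝ) (hε : 0 < ε) (hμ : 0 < μ) (hτ : 0 < τ)
    (hhx : 0 < hx) (hhy : 0 < hy) (hhz : 0 < hz) (lam : ℝ)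
    (E1n E2n E3n H1n H2n H3n E1a E2a E3a H1a H2a H3a
      E1b E2b E3b H1b H2b H3b E1f E2f E3f H1f H2f H3f :
        Fin I × Fin J × Fin K → ℝ)
    (θ : Fin I × Fin J × Fin K → ℝ)
    -- Stage 1: from (Eⁿ, Hⁿ) to (E^{[1]}, H^{[1]})
    (hs1x : ∀ (j : Fin J) (k : Fin K), stageRel I ε μ (τ / hx)
      (fun i => E3n (i, j, k)) (fun i => E3a (i, j, k))
      (fun i => H2n (i, j, k)) (fun i => H2a (i, j, k)))
    (hs1y : ∀ (i : Fin I) (k : Fin K), stageRel J ε μ (τ / hy)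
      (fun j => E1n (i, j, k)) (fun j => E1a (i, j, k))
      (fun j => H3n (i, j, k)) (fun j => H3a (i, j, k)))
    (hs1z : ∀ (i : Fin I) (j : Fin J), stageRel K ε μ (τ / hz)
      (fun k => E2n (i, j, k)) (fun k => E2a (i, j, k))
      (fun k => H1n (i, j, k)) (fun k => H1a (i, j, k)))
    -- Stage 2: from (E^{[1]}, H^{[1]}) to (E^{[2]}, H^{[2]})
    (hs2x : ∀ (j : Fin J) (k : Fin K), stageRel I ε μ (-(τ / hx))
      (fun i => E2a (i, j, k)) (fun i => E2b (i, j, k))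
      (fun i => H3a (i, j, k)) (fun i => H3b (i, j, k)))
    (hs2y : ∀ (i : Fin I) (k : Fin K), stageRel J ε μ (-(τ / hy))
      (fun j => E3a (i, j, k)) (fun j => E3b (i, j, k))
      (fun j => H1a (i, j, k)) (fun j => H1b (i, j, k)))
    (hs2z : ∀ (i : Fin I) (j : Fin J), stageRel K ε μ (-(τ / hz))
      (fun k => E1a (i, j, k)) (fun k => E1b (i, j, k))
      (fun k => H2a (i, j, k)) (fun k => H2b (i, j, k)))
    -- Stage 3: pointwise rotation by the noise increment
    (hs3E1 : ∀ p, E1f p = Real.cos (lam * θ p / Real.sqrt (ε * μ)) * E1b p -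
      Real.sqrt (μ / ε) * Real.sin (lam * θ p / Real.sqrt (ε * μ)) * H1b p)
    (hs3E2 : ∀ p, E2f p = Real.cos (lam * θ p / Real.sqrt (ε * μ)) * E2b p -
      Real.sqrt (μ / ε) * Real.sin (lam * θ p / Real.sqrt (ε * μ)) * H2b p)
    (hs3E3 : ∀ p, E3f p = Real.cos (lam * θ p / Real.sqrt (ε * μ)) * E3b p -
      Real.sqrt (μ / ε) * Real.sin (lam * θ p / Real.sqrt (ε * μ)) * H3b p)
    (hs3H1 : ∀ p, H1f p = Real.sqrt (ε / μ) *
      Real.sin (lam * θ p / Real.sqrt (ε * μ)) * E1b p +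
      Real.cos (lam * θ p / Real.sqrt (ε * μ)) * H1b p)
    (hs3H2 : ∀ p, H2f p = Real.sqrt (ε / μ) *
      Real.sin (lam * θ p / Real.sqrt (ε * μ)) * E2b p +
      Real.cos (lam * θ p / Real.sqrt (ε * μ)) * H2b p)
    (hs3H3 : ∀ p, H3f p = Real.sqrt (ε / μ) *
      Real.sin (lam * θ p / Real.sqrt (ε * μ)) * E3b p +
      Real.cos (lam * θ p / Real.sqrt (ε * μ)) * H3b p) :
    discreteEnergy ε μ E1f E2f E3f H1f H2f H3f =
      discreteEnergy ε μ E1n E2n E3n H1n H2n H3n :=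
  splittingI_energy_conservation_general I J K hI hJ hK ε μ τ hx hy hz hε hμ lam E1n E2n E3n H1n H2n
    H3n E1a E2a E3a H1a H2a H3a E1b E2b E3b H1b H2b H3b E1f E2f E3f H1f H2f H3f θ hs1x hs1y hs1z
    hs2x hs2y hs2z hs3E1 hs3E2 hs3E3 hs3H1 hs3H2 hs3H3
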